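/- arXiv:2205.06163 — 3 statements merged into one kernel-verified Lean document; each statement's English description precedes it below -/
import Mathlib

section
/- Let ξ_j be independent standard Gaussians and λ_j positive reals satisfying c j² ≤ λ_j ≤ C j² for 0 < c ≤ C. If 1/2 < α ≤ 3/2, then ∑_{j≥1} λ_j^{1−α} ξ_j² = ∞ almost surely. -/
/-!
Since `λ_j ≍ j²` and `1 - α ≥ -1/2`, the weights satisfy `λ_j^{1-α} ≥ K / j` for some `K > 0`,
so it suffices that `∑ ξ_j² / j = ∞` almost surely. By the strong law of large numbers the
averages of `ξ_j²` tend to `𝔼 ξ_0² = 1`, hence the blocks `∑_{n ≤ j < 2n} ξ_j² / j` stay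
asymptotically above `1/2` and the series cannot converge.
-/

open MeasureTheory ProbabilityTheory Real Filter Topology Finset
open scoped NNReal

lemma integral_sq_gaussianReal_zero (v : ℝ≥0) : ∫ x, x ^ 2 ∂gaussianReal 0 v = v := by
  simpa using
    (variance_of_integral_eq_zero aemeasurable_id (integral_id_gaussianReal (μ := 0) (v := v))).symm

lemma tendsto_average_sq_of_iIndepFun_gaussianReal {Ω : Type*} [MeasurableSpace Ω]
    {μ : Measure Ω} {ξ : ℕ → Ω → ℝ} (hmeas : ∀ j, AEMeasurable (ξ j) μ)
    (hindep : iIndepFun ξ μ) {v : ℝ≥0} (hdist : ∀ j, μ.map (ξ j) = gaussianReal 0 v) :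
    ∀ᵐ ω ∂μ, Tendsto (fun n : ℕ => (∑ j ∈ range n, ξ j ω ^ 2) / n) atTop (𝓝 v) := by
  have hsq : Measurable fun x : ℝ => x ^ 2 := measurable_id.pow_const 2
  have hint : Integrable (fun ω => ξ 0 ω ^ 2) μ := by
    refine (integrable_map_measure hsq.aestronglyMeasurable (hmeas 0)).1 ?_
    rw [hdist 0]
    exact (memLp_id_gaussianReal 2).integrable_sq
  have hmean : ∫ ω, ξ 0 ω ^ 2 ∂μ = v := by
    rw [← integral_sq_gaussianReal_zero v, ← hdist 0,
      integral_map (hmeas 0) hsq.aestronglyMeasurable]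
  have hident : ∀ j, IdentDistrib (ξ j) (ξ 0) μ μ :=
    fun j => ⟨hmeas j, hmeas 0, by rw [hdist j, hdist 0]⟩
  have hslln := strong_law_ae_real (fun j ω => ξ j ω ^ 2) hint
    (fun i j hij => (hindep.indepFun hij).comp hsq hsq) (fun j => (hident j).comp hsq)
  simpa only [hmean] using hslln

lemma not_summable_div_succ_of_tendsto_average {a : ℕ → ℝ} (ha : ∀ j, 0 ≤ a j) {L : ℝ}
    (hL : 0 < L) (h : Tendsto (fun n : ℕ => (∑ j ∈ range n, a j) / n) atTop (𝓝 L)) :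
    ¬ Summable fun j : ℕ => a j / ((j : ℝ) + 1) := by
  intro hs
  set S : ℕ → ℝ := fun n => ∑ j ∈ range n, a j
  have h2n : Tendsto (fun n : ℕ => 2 * n) atTop atTop :=
    tendsto_id.const_mul_atTop' two_pos
  have hblock : Tendsto (fun n : ℕ => ∑ j ∈ Ico n (2 * n), a j / ((j : ℝ) + 1))
      atTop (𝓝 0) := by
    have hpartial := hs.hasSum.tendsto_sum_nat
    have hdiff := (hpartial.comp h2n).sub hpartial
    rw [sub_self] at hdiff
    exact hdiff.congr fun n => (sum_Ico_eq_sub _ (by omega)).symm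
  have haverage : Tendsto (fun n : ℕ => S (2 * n) / ((2 * n : ℕ) : ℝ) - S n / n / 2)
      atTop (𝓝 (L / 2)) := by
    have hdiff := (h.comp h2n).sub (h.div_const 2)
    rwa [sub_half] at hdiff
  have hle : ∀ᶠ n : ℕ in atTop, S (2 * n) / ((2 * n : ℕ) : ℝ) - S n / n / 2 ≤
      ∑ j ∈ Ico n (2 * n), a j / ((j : ℝ) + 1) := by
    filter_upwards [eventually_ge_atTop 1] with n hn
    have hn' : (0 : ℝ) < n := by exact_mod_cast hn
    calc S (2 * n) / ((2 * n : ℕ) : ℝ) - S n / n / 2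
        = ∑ j ∈ Ico n (2 * n), a j / ((2 * n : ℕ) : ℝ) := by
          rw [← sum_div, sum_Ico_eq_sub _ (by omega)]
          push_cast
          field_simp
          ring
      _ ≤ ∑ j ∈ Ico n (2 * n), a j / ((j : ℝ) + 1) := by
          refine sum_le_sum fun j hj => div_le_div_of_nonneg_left (ha j) (by positivity) ?_
          exact_mod_cast (mem_Ico.1 hj).2
  linarith [le_of_tendsto_of_tendsto haverage hblock hle]

lemma tsum_ofReal_eq_top_of_not_summable {ι : Type*} {f : ι → ℝ} (hf : ∀ i, 0 ≤ f i)
    (h : ¬ Summable f) : ∑' i, ENNReal.ofReal (f i) = ⊤ := by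
  by_contra hne
  exact h ((ENNReal.summable_toReal hne).congr fun i => ENNReal.toReal_ofReal (hf i))

lemma min_rpow_mul_inv_le_rpow {c C x y t : ℝ} (hc : 0 < c) (hcC : c ≤ C) (hy : 1 ≤ y)
    (hlow : c * y ^ 2 ≤ x) (hupp : x ≤ C * y ^ 2) (ht : -1 ≤ 2 * t) :
    min (c ^ t) (C ^ t) * y⁻¹ ≤ x ^ t := by
  have hy_inv : y⁻¹ ≤ (y ^ 2) ^ t := by
    rw [← rpow_neg_one, ← rpow_natCast, ← rpow_mul (by linarith)]
    exact rpow_le_rpow_of_exponent_le hy (by push_cast; linarith)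
  rcases le_or_gt 0 t with ht0 | ht0
  · calc min (c ^ t) (C ^ t) * y⁻¹ ≤ c ^ t * (y ^ 2) ^ t :=
          mul_le_mul (min_le_left _ _) hy_inv (by positivity) (by positivity)
      _ = (c * y ^ 2) ^ t := (mul_rpow hc.le (by positivity)).symm
      _ ≤ x ^ t := rpow_le_rpow (by positivity) hlow ht0
  · have hC : 0 ≤ C := hc.le.trans hcC
    calc min (c ^ t) (C ^ t) * y⁻¹ ≤ C ^ t * (y ^ 2) ^ t :=
          mul_le_mul (min_le_right _ _) hy_inv (by positivity) (rpow_nonneg hC t)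
      _ = (C * y ^ 2) ^ t := (mul_rpow hC (by positivity)).symm
      _ ≤ x ^ t := rpow_le_rpow_of_nonpos (lt_of_lt_of_le (by positivity) hlow) hupp ht0.le

theorem whittle_matern_not_in_H1_series_diverges_general
    {Ω : Type*} [MeasureSpace Ω]
    (ξ : ℕ → Ω → ℝ) (hmeas : ∀ j, Measurable (ξ j))
    (hindep : iIndepFun ξ ℙ)
    (hdist : ∀ j, Measure.map (ξ j) ℙ = gaussianReal 0 1)
    (lam : ℕ → ℝ) (c C : ℝ) (hc : 0 < c) (hcC : c ≤ C)
    (hlow : ∀ j : ℕ, c * ((j : ℝ) + 1) ^ 2 ≤ lam j)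
    (hupp : ∀ j : ℕ, lam j ≤ C * ((j : ℝ) + 1) ^ 2)
    (α : ℝ) (hα' : α ≤ 3 / 2) :
    ∀ᵐ ω ∂ℙ, ∑' j : ℕ, ENNReal.ofReal ((lam j) ^ (1 - α) * ξ j ω ^ 2) = ⊤ := by
  set K := min (c ^ (1 - α)) (C ^ (1 - α))
  have hK : 0 < K := lt_min (rpow_pos_of_pos hc _) (rpow_pos_of_pos (hc.trans_le hcC) _)
  filter_upwards [tendsto_average_sq_of_iIndepFun_gaussianReal (fun j => (hmeas j).aemeasurable)
    hindep hdist] with ω hω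
  have hdiv : ¬ Summable fun j : ℕ => K * (ξ j ω ^ 2 / ((j : ℝ) + 1)) := by
    rw [summable_mul_left_iff hK.ne']
    exact not_summable_div_succ_of_tendsto_average (fun j => sq_nonneg _) one_pos
      (by simpa using hω)
  refine top_le_iff.1 <| (tsum_ofReal_eq_top_of_not_summable (fun j => by positivity)
    hdiv).symm.trans_le <| ENNReal.tsum_le_tsum fun j => ENNReal.ofReal_le_ofReal ?_
  have hweight := min_rpow_mul_inv_le_rpow (x := lam j) (t := 1 - α) hc hcC
    (by simp : (1 : ℝ) ≤ j + 1) (hlow j) (hupp j) (by linarith)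
  calc K * (ξ j ω ^ 2 / ((j : ℝ) + 1)) = K * ((j : ℝ) + 1)⁻¹ * ξ j ω ^ 2 := by ring
    _ ≤ lam j ^ (1 - α) * ξ j ω ^ 2 := mul_le_mul_of_nonneg_right hweight (sq_nonneg _)

/-- If `ξ_j` are independent standard Gaussians and `λ_j ≍ j²` (Weyl asymptotics),
then for `1/2 < α ≤ 3/2` the series `∑_j λ_j^{1-α} ξ_j²` diverges almost surely.
(Indices shifted: `lam j` corresponds to the `(j+1)`-th eigenvalue.) -/
theorem whittle_matern_not_in_H1_series_diverges
    {Ω : Type*} [MeasureSpace Ω] [IsProbabilityMeasure (ℙ : Measure Ω)]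
    (ξ : ℕ → Ω → ℝ) (hmeas : ∀ j, Measurable (ξ j))
    (hindep : iIndepFun ξ ℙ)
    (hdist : ∀ j, Measure.map (ξ j) ℙ = gaussianReal 0 1)
    (lam : ℕ → ℝ) (c C : ℝ) (hc : 0 < c) (hcC : c ≤ C)
    (hlow : ∀ j : ℕ, c * ((j : ℝ) + 1) ^ 2 ≤ lam j)
    (hupp : ∀ j : ℕ, lam j ≤ C * ((j : ℝ) + 1) ^ 2)
    (α : ℝ) (hα : 1 / 2 < α) (hα' : α ≤ 3 / 2) :
    ∀ᵐ ω ∂ℙ, ∑' j : ℕ, ENNReal.ofReal ((lam j) ^ (1 - α) * ξ j ω ^ 2) = ⊤ :=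
  whittle_matern_not_in_H1_series_diverges_general ξ hmeas hindep hdist lam c C hc hcC hlow hupp α
    hα'
end

section
/- Adjusting the marginal of a Gaussian vector: Let (X_A, X_B) be jointly centered Gaussian with positive definite covariance Σ (block structure Σ_AA, Σ_AB, Σ_BA, Σ_BB) and precision Q = Σ^{-1}. Let H be a symmetric positive definite matrix, X_B* ~ N(0, H) independent of X_{A|B} ~ N(0, Σ_AA − Σ_AB Σ_BB^{-1} Σ_BA), and set X_A* = X_{A|B} + Σ_AB Σ_BB^{-1} X_B*. Then (X_A*, X_B*) is centered Gaussian with precision matrix Q* whose blocks are Q*_{AA} = Q_{AA}, Q*_{AB} = Q_{AB}, Q*_{BA} = Q_{BA}, and Q*_{BB} = Q_{BB} + H^{-1} − Σ_BB^{-1}. -/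
open Matrix

/-!
Writing `K = Σ_AB Σ_BB⁻¹`, `L = Σ_BB⁻¹ Σ_BA` and `S = Σ_AA − Σ_AB Σ_BB⁻¹ Σ_BA`, the adjusted
covariance factors as `[[1, K], [0, 1]] · diag(S, H) · [[1, 0], [L, 1]]`, so its inverse is
`[[S⁻¹, −S⁻¹K], [−LS⁻¹, H⁻¹ + LS⁻¹K]]`. Taking `H = Σ_BB` recovers `Σ` itself, hence `Q` has
the same blocks with `Σ_BB⁻¹` in place of `H⁻¹`: only the `BB` block changes, by `H⁻¹ − Σ_BB⁻¹`.
-/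

namespace Matrix

variable {m n R : Type*} [Fintype m] [Fintype n] [DecidableEq m] [DecidableEq n] [CommRing R]

theorem fromBlocks_add_mul_mul_eq (S : Matrix m m R) (K : Matrix m n R) (L : Matrix n m R)
    (H : Matrix n n R) :
    fromBlocks (S + K * H * L) (K * H) (H * L) H =
      fromBlocks 1 K 0 1 * fromBlocks S 0 0 H * fromBlocks 1 0 L 1 := by
  simp only [fromBlocks_multiply, Matrix.one_mul, Matrix.mul_one, Matrix.zero_mul,
    Matrix.mul_zero, add_zero, zero_add, Matrix.mul_assoc]

theorem inv_fromBlocks_add_mul_mul {S : Matrix m m R} {H : Matrix n n R} (hS : IsUnit S)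
    (hH : IsUnit H) (K : Matrix m n R) (L : Matrix n m R) :
    (fromBlocks (S + K * H * L) (K * H) (H * L) H)⁻¹ =
      fromBlocks S⁻¹ (-(S⁻¹ * K)) (-(L * S⁻¹)) (H⁻¹ + L * S⁻¹ * K) := by
  rw [fromBlocks_add_mul_mul_eq, Matrix.mul_inv_rev, Matrix.mul_inv_rev,
    inv_fromBlocks_zero₁₂_of_isUnit_iff _ _ _ (iff_of_true isUnit_one isUnit_one),
    inv_fromBlocks_zero₂₁_of_isUnit_iff _ _ _ (iff_of_true hS hH),
    inv_fromBlocks_zero₂₁_of_isUnit_iff _ _ _ (iff_of_true isUnit_one isUnit_one)]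
  simp only [fromBlocks_multiply, inv_one, Matrix.one_mul, Matrix.mul_one, Matrix.zero_mul,
    Matrix.mul_zero, add_zero, neg_zero, Matrix.mul_neg, Matrix.neg_mul, neg_neg,
    Matrix.mul_assoc, add_comm]

theorem isUnit_schur_of_isUnit_fromBlocks {A : Matrix m m R} {B : Matrix m n R}
    {C : Matrix n m R} {D : Matrix n n R} (hD : IsUnit D) (h : IsUnit (fromBlocks A B C D)) :
    IsUnit (A - B * D⁻¹ * C) := by
  let := hD.invertible
  simpa only [invOf_eq_nonsing_inv] using isUnit_fromBlocks_iff_of_invertible₂₂.mp h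

end Matrix

theorem gaussian_adjust_marginal_precision_general
    {A B : Type*} [Fintype A] [Fintype B] [DecidableEq A] [DecidableEq B]
    (SAA : Matrix A A ℝ) (SAB : Matrix A B ℝ) (SBA : Matrix B A ℝ) (SBB : Matrix B B ℝ)
    (QAA : Matrix A A ℝ) (QAB : Matrix A B ℝ) (QBA : Matrix B A ℝ) (QBB : Matrix B B ℝ)
    (hSpd : (Matrix.fromBlocks SAA SAB SBA SBB).PosDef)
    (hQ : (Matrix.fromBlocks SAA SAB SBA SBB)⁻¹ = Matrix.fromBlocks QAA QAB QBA QBB)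
    (H : Matrix B B ℝ) (hHpd : H.PosDef) :
    (Matrix.fromBlocks
      (SAA - SAB * SBB⁻¹ * SBA + SAB * SBB⁻¹ * H * SBB⁻¹ * SBA)
      (SAB * SBB⁻¹ * H)
      (H * SBB⁻¹ * SBA)
      H)⁻¹ =
      Matrix.fromBlocks QAA QAB QBA (QBB + H⁻¹ - SBB⁻¹) := by
  have hSBB : IsUnit SBB := (hSpd.submatrix Sum.inr_injective).isUnit
  have hSchur := isUnit_schur_of_isUnit_fromBlocks hSBB hSpd.isUnit
  have hinv := fun {H : Matrix B B ℝ} (hH : IsUnit H) =>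
    inv_fromBlocks_add_mul_mul hSchur hH (SAB * SBB⁻¹) (SBB⁻¹ * SBA)
  have hSigma : fromBlocks SAA SAB SBA SBB =
      fromBlocks (SAA - SAB * SBB⁻¹ * SBA + SAB * SBB⁻¹ * SBB * (SBB⁻¹ * SBA))
        (SAB * SBB⁻¹ * SBB) (SBB * (SBB⁻¹ * SBA)) SBB := by
    have hdet := (isUnit_iff_isUnit_det SBB).mp hSBB
    rw [nonsing_inv_mul_cancel_right _ _ hdet, mul_nonsing_inv_cancel_left _ _ hdet,
      ← Matrix.mul_assoc, sub_add_cancel]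
  rw [hSigma, hinv hSBB] at hQ
  obtain ⟨rfl, rfl, rfl, rfl⟩ := fromBlocks_inj.mp hQ
  simp only [← Matrix.mul_assoc] at hinv ⊢
  rw [hinv hHpd.isUnit]
  congr 1
  abel

/-- Adjusting the marginal of a Gaussian vector (matrix form): if `Σ` is a symmetric
positive definite block matrix with inverse `Q` (in blocks), and `H` is symmetric
positive definite, then the covariance matrix `Σ*` of the adjusted vector
`(X_A*, X_B*)`, with `X_B* ~ N(0, H)` and `X_A* = X_{A|B} + Σ_AB Σ_BB⁻¹ X_B*`, has
inverse (precision matrix) with blocks `Q_AA, Q_AB, Q_BA, Q_BB + H⁻¹ − Σ_BB⁻¹`. -/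
theorem gaussian_adjust_marginal_precision
    {A B : Type*} [Fintype A] [Fintype B] [DecidableEq A] [DecidableEq B]
    (SAA : Matrix A A ℝ) (SAB : Matrix A B ℝ) (SBA : Matrix B A ℝ) (SBB : Matrix B B ℝ)
    (QAA : Matrix A A ℝ) (QAB : Matrix A B ℝ) (QBA : Matrix B A ℝ) (QBB : Matrix B B ℝ)
    (hSsym : (Matrix.fromBlocks SAA SAB SBA SBB).IsSymm)
    (hSpd : (Matrix.fromBlocks SAA SAB SBA SBB).PosDef)
    (hQ : (Matrix.fromBlocks SAA SAB SBA SBB)⁻¹ = Matrix.fromBlocks QAA QAB QBA QBB)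
    (H : Matrix B B ℝ) (hHsym : H.IsSymm) (hHpd : H.PosDef) :
    (Matrix.fromBlocks
      (SAA - SAB * SBB⁻¹ * SBA + SAB * SBB⁻¹ * H * SBB⁻¹ * SBA)
      (SAB * SBB⁻¹ * H)
      (H * SBB⁻¹ * SBA)
      H)⁻¹ =
      Matrix.fromBlocks QAA QAB QBA (QBB + H⁻¹ - SBB⁻¹) :=
  gaussian_adjust_marginal_precision_general SAA SAB SBA SBB QAA QAB QBA QBB hSpd hQ H hHpd
end

section
/- Let λ̂_j ≥ 0 be a nondecreasing sequence with c j² ≤ λ̂_j + κ² for all j (Weyl lower bound) and let τ, τ̃, κ, κ̃ > 0 and α, α̃ > 1/2. Define c_j = τ̃^{2/α} τ^{-2/α} (κ̃² + λ̂_j)^{α̃/α} (κ² + λ̂_j)^{-1}. Then (i) the sequence (c_j) is bounded above and below by positive constants if and only if α̃ = α; (ii) if α̃ = α then c_j → (τ̃/τ)^{2/α}; (iii) ∑_j (c_j − 1)² < ∞ holds if and only if α̃ = α and τ̃ = τ. -/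
/-!
Write `c_j = A (κ̃² + λ̂_j)^β / (κ² + λ̂_j)` with `A = (τ̃/τ)^{2/α}` and `β = α̃/α`.
Since `λ̂_j → ∞`, `c_j` tends to `A`, `0` or `∞` according as `β = 1`, `β < 1` or `β > 1`, and a
positive sequence is bounded away from `0` and `∞` only in the first case. Square summability of
`c_j - 1` forces `c_j → 1`, hence `β = 1` and `A = 1`; conversely, then
`c_j - 1 = (κ̃² - κ²)/(κ² + λ̂_j)`, which is `O(j⁻²)` by the Weyl lower bound.
-/

open Real Filter Topology

section Asymptotics

variable {ι : Type*} {l : Filter ι} {u : ι → ℝ}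

theorem tendsto_add_div_add_of_tendsto_atTop (a b : ℝ) (hu : Tendsto u l atTop) :
    Tendsto (fun i => (b + u i) / (a + u i)) l (𝓝 1) := by
  have hau : Tendsto (fun i => a + u i) l atTop := tendsto_atTop_add_const_left _ a hu
  have h : Tendsto (fun i => 1 + (b - a) / (a + u i)) l (𝓝 (1 + 0)) :=
    tendsto_const_nhds.add (tendsto_const_nhds.div_atTop hau)
  rw [add_zero] at h
  refine h.congr' ?_
  filter_upwards [hau.eventually_gt_atTop 0] with i hi
  field_simp
  ring

theorem eventually_rpow_mul_inv_eq (a b β : ℝ) (hu : Tendsto u l atTop) :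
    ∀ᶠ i in l, (b + u i) / (a + u i) * (b + u i) ^ (β - 1) = (b + u i) ^ β * (a + u i)⁻¹ := by
  filter_upwards [(tendsto_atTop_add_const_left _ b hu).eventually_gt_atTop 0] with i hi
  rw [rpow_sub_one hi.ne']
  field_simp

theorem tendsto_rpow_mul_inv_of_lt_one (a b : ℝ) {β : ℝ} (hβ : β < 1) (hu : Tendsto u l atTop) :
    Tendsto (fun i => (b + u i) ^ β * (a + u i)⁻¹) l (𝓝 0) := by
  have hpow : Tendsto (fun i => (b + u i) ^ (β - 1)) l (𝓝 0) := by
    simpa [Function.comp_def] using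
      (tendsto_rpow_neg_atTop (sub_pos.2 hβ)).comp (tendsto_atTop_add_const_left _ b hu)
  simpa using ((tendsto_add_div_add_of_tendsto_atTop a b hu).mul hpow).congr'
    (eventually_rpow_mul_inv_eq a b β hu)

theorem tendsto_rpow_mul_inv_of_one_lt (a b : ℝ) {β : ℝ} (hβ : 1 < β) (hu : Tendsto u l atTop) :
    Tendsto (fun i => (b + u i) ^ β * (a + u i)⁻¹) l atTop :=
  ((tendsto_add_div_add_of_tendsto_atTop a b hu).pos_mul_atTop one_pos
    ((tendsto_rpow_atTop (sub_pos.2 hβ)).comp (tendsto_atTop_add_const_left _ b hu))).congr'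
    (eventually_rpow_mul_inv_eq a b β hu)

end Asymptotics

section QuadraticGrowth

variable {u : ℕ → ℝ} {c : ℝ}

theorem tendsto_atTop_of_quadratic_lower_bound (hc : 0 < c)
    (hu : ∀ n : ℕ, c * ((n : ℝ) + 1) ^ 2 ≤ u n) : Tendsto u atTop atTop := by
  refine tendsto_atTop_mono hu (Tendsto.const_mul_atTop hc ?_)
  exact (tendsto_pow_atTop two_ne_zero).comp
    (tendsto_atTop_add_const_right _ 1 tendsto_natCast_atTop_atTop)

theorem summable_inv_sq_of_quadratic_lower_bound (hc : 0 < c)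
    (hu : ∀ n : ℕ, c * ((n : ℝ) + 1) ^ 2 ≤ u n) : Summable fun n => (u n ^ 2)⁻¹ := by
  have hp : Summable fun n : ℕ => (((n + 1 : ℕ) : ℝ) ^ 4)⁻¹ :=
    (summable_nat_add_iff 1).2 (Real.summable_nat_pow_inv.2 (by norm_num))
  refine (hp.mul_left (c ^ 2)⁻¹).of_nonneg_of_le (fun n => by positivity) fun n => ?_
  have hpos : 0 < c * ((n : ℝ) + 1) ^ 2 := by positivity
  calc (u n ^ 2)⁻¹ ≤ ((c * ((n : ℝ) + 1) ^ 2) ^ 2)⁻¹ :=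
        inv_anti₀ (by positivity) (pow_le_pow_left₀ hpos.le (hu n) 2)
    _ = (c ^ 2)⁻¹ * (((n + 1 : ℕ) : ℝ) ^ 4)⁻¹ := by push_cast; field_simp

theorem summable_add_div_add_sub_one_sq (hc : 0 < c)
    (hu : ∀ n : ℕ, c * ((n : ℝ) + 1) ^ 2 ≤ u n) {a : ℝ} (ha : 0 ≤ a) (b : ℝ) :
    Summable fun n => ((b + u n) / (a + u n) - 1) ^ 2 := by
  have hau : ∀ n : ℕ, c * ((n : ℝ) + 1) ^ 2 ≤ a + u n := fun n =>
    (hu n).trans (le_add_of_nonneg_left ha)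
  refine ((summable_inv_sq_of_quadratic_lower_bound hc hau).mul_left ((b - a) ^ 2)).congr
    fun n => ?_
  have hpos : 0 < a + u n := lt_of_lt_of_le (by positivity) (hau n)
  field_simp
  ring

end QuadraticGrowth

section PositiveBounds

variable {s : ℕ → ℝ}

theorem exists_pos_bounds_of_tendsto (hs : ∀ n, 0 < s n) {L : ℝ} (hL : 0 < L)
    (h : Tendsto s atTop (𝓝 L)) : ∃ m M : ℝ, 0 < m ∧ ∀ n, m ≤ s n ∧ s n ≤ M := by
  obtain ⟨M, hM⟩ := h.bddAbove_range
  obtain ⟨K, hK⟩ := (h.inv₀ hL.ne').bddAbove_range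
  have hK0 : 0 < K := (inv_pos.2 (hs 0)).trans_le (hK (Set.mem_range_self 0))
  exact ⟨K⁻¹, M, inv_pos.2 hK0, fun n =>
    ⟨(inv_le_comm₀ hK0 (hs n)).2 (hK (Set.mem_range_self n)), hM (Set.mem_range_self n)⟩⟩

theorem not_exists_pos_bounds_of_tendsto_zero (h : Tendsto s atTop (𝓝 0)) :
    ¬∃ m M : ℝ, 0 < m ∧ ∀ n, m ≤ s n ∧ s n ≤ M := by
  rintro ⟨m, M, hm, hb⟩
  exact hm.not_ge (ge_of_tendsto' h fun n => (hb n).1)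

theorem not_exists_pos_bounds_of_tendsto_atTop (h : Tendsto s atTop atTop) :
    ¬∃ m M : ℝ, 0 < m ∧ ∀ n, m ≤ s n ∧ s n ≤ M := by
  rintro ⟨m, M, -, hb⟩
  obtain ⟨n, hn⟩ := (h.eventually_gt_atTop M).exists
  exact hn.not_ge (hb n).2

theorem exists_pos_bounds_iff_of_trichotomy (hs : ∀ n, 0 < s n) {p q L : ℝ} (hL : 0 < L)
    (h_eq : p = q → Tendsto s atTop (𝓝 L)) (h_lt : p < q → Tendsto s atTop (𝓝 0))
    (h_gt : q < p → Tendsto s atTop atTop) :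
    (∃ m M : ℝ, 0 < m ∧ ∀ n, m ≤ s n ∧ s n ≤ M) ↔ p = q := by
  refine ⟨fun hb => ?_, fun h => exists_pos_bounds_of_tendsto hs hL (h_eq h)⟩
  rcases lt_trichotomy p q with h | h | h
  exacts [absurd hb (not_exists_pos_bounds_of_tendsto_zero (h_lt h)), h,
    absurd hb (not_exists_pos_bounds_of_tendsto_atTop (h_gt h))]

theorem tendsto_of_summable_sub_sq {L : ℝ} (h : Summable fun n => (s n - L) ^ 2) :
    Tendsto s atTop (𝓝 L) := by
  have habs : Tendsto (fun n => |s n - L|) atTop (𝓝 0) := by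
    simpa [Function.comp_def, sqrt_sq_eq_abs] using
      (continuous_sqrt.tendsto 0).comp h.tendsto_atTop_zero
  simpa using ((tendsto_zero_iff_abs_tendsto_zero _).2 habs).add_const L

end PositiveBounds

theorem div_rpow_eq_one_iff {x y z : ℝ} (hx : 0 < x) (hy : 0 < y) (hz : z ≠ 0) :
    (x / y) ^ z = 1 ↔ x = y := by
  rw [← one_rpow z, rpow_left_inj (div_pos hx hy).le zero_le_one hz, div_eq_one_iff_eq hy.ne']

theorem whittle_matern_measure_equivalence_sequence_general
    (lamhat : ℕ → ℝ)
    (c : ℝ) (hc : 0 < c)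
    (hlow : ∀ j : ℕ, c * ((j : ℝ) + 1) ^ 2 ≤ lamhat j)
    (tau taut kappa kappat : ℝ) (htau : 0 < tau) (htaut : 0 < taut)
    (alpha alphat : ℝ) (halpha : 1 / 2 < alpha)
    (cseq : ℕ → ℝ)
    (hcseq : ∀ j, cseq j = taut ^ (2 / alpha) * tau ^ (-(2 / alpha)) *
      (kappat ^ 2 + lamhat j) ^ (alphat / alpha) * (kappa ^ 2 + lamhat j)⁻¹) :
    ((∃ m M : ℝ, 0 < m ∧ ∀ j, m ≤ cseq j ∧ cseq j ≤ M) ↔ alphat = alpha) ∧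
      (alphat = alpha →
        Tendsto cseq atTop (nhds ((taut / tau) ^ (2 / alpha)))) ∧
      (Summable (fun j => (cseq j - 1) ^ 2) ↔ (alphat = alpha ∧ taut = tau)) := by
  have halpha0 : 0 < alpha := by linarith
  set A := taut ^ (2 / alpha) * tau ^ (-(2 / alpha))
  have hA_eq : (taut / tau) ^ (2 / alpha) = A := by
    rw [div_rpow htaut.le htau.le, div_eq_mul_inv, ← rpow_neg htau.le]
  have hA : 0 < A := hA_eq ▸ by positivity
  have hA_one : A = 1 ↔ taut = tau := hA_eq ▸ div_rpow_eq_one_iff htaut htau (by positivity)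
  have hlam := tendsto_atTop_of_quadratic_lower_bound hc hlow
  have hcseq' : cseq = fun j => A * ((kappat ^ 2 + lamhat j) ^ (alphat / alpha) *
      (kappa ^ 2 + lamhat j)⁻¹) := funext fun j => (hcseq j).trans (mul_assoc _ _ _)
  have hpos : ∀ j, 0 < cseq j := fun j => by
    have : 0 < lamhat j := lt_of_lt_of_le (by positivity) (hlow j)
    rw [hcseq']; positivity
  have hcseq_eq : alphat = alpha →
      cseq = fun j => A * ((kappat ^ 2 + lamhat j) / (kappa ^ 2 + lamhat j)) := by
    rintro rfl
    simp only [hcseq', div_self halpha0.ne', rpow_one, div_eq_mul_inv]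
  have h_eq : alphat = alpha → Tendsto cseq atTop (𝓝 A) := fun h => by
    simpa [hcseq_eq h] using (tendsto_add_div_add_of_tendsto_atTop _ _ hlam).const_mul A
  have h_lt : alphat < alpha → Tendsto cseq atTop (𝓝 0) := fun h => by
    simpa [hcseq'] using
      (tendsto_rpow_mul_inv_of_lt_one _ _ ((div_lt_one halpha0).2 h) hlam).const_mul A
  have h_gt : alpha < alphat → Tendsto cseq atTop atTop := fun h => hcseq' ▸
    (tendsto_rpow_mul_inv_of_one_lt _ _ ((one_lt_div halpha0).2 h) hlam).const_mul_atTop hA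
  have h_bdd := exists_pos_bounds_iff_of_trichotomy hpos hA h_eq h_lt h_gt
  refine ⟨h_bdd, fun h => hA_eq ▸ h_eq h, fun hs => ?_, fun ⟨h1, h2⟩ => ?_⟩
  · have hlim := tendsto_of_summable_sub_sq hs
    have h1 := h_bdd.1 (exists_pos_bounds_of_tendsto hpos one_pos hlim)
    exact ⟨h1, hA_one.1 (tendsto_nhds_unique (h_eq h1) hlim)⟩
  · rw [hcseq_eq h1, hA_one.2 h2]
    simpa using summable_add_div_add_sub_one_sq hc hlow (sq_nonneg kappa) (kappat ^ 2)

/-- Spectral computation behind equivalence of Gaussian Whittle–Matérn measures: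
for eigenvalues `λ̂_j` obeying the two-sided Weyl bound `c j² ≤ λ̂_j ≤ C j²`,
the sequence `c_j = τ̃^{2/α} τ^{-2/α} (κ̃² + λ̂_j)^{α̃/α} (κ² + λ̂_j)⁻¹` is
(i) bounded above and below by positive constants iff `α̃ = α`;
(ii) converges to `(τ̃/τ)^{2/α}` when `α̃ = α`;
(iii) satisfies `∑ (c_j − 1)² < ∞` iff `α̃ = α` and `τ̃ = τ`.
(Indices shifted so `lamhat j` is the `(j+1)`-th eigenvalue.) -/
theorem whittle_matern_measure_equivalence_sequence
    (lamhat : ℕ → ℝ) (hnonneg : ∀ j, 0 ≤ lamhat j) (hmono : Monotone lamhat)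
    (c C : ℝ) (hc : 0 < c) (hcC : c ≤ C)
    (hlow : ∀ j : ℕ, c * ((j : ℝ) + 1) ^ 2 ≤ lamhat j)
    (hupp : ∀ j : ℕ, lamhat j ≤ C * ((j : ℝ) + 1) ^ 2)
    (tau taut kappa kappat : ℝ) (htau : 0 < tau) (htaut : 0 < taut)
    (hkappa : 0 < kappa) (hkappat : 0 < kappat)
    (alpha alphat : ℝ) (halpha : 1 / 2 < alpha) (halphat : 1 / 2 < alphat)
    (cseq : ℕ → ℝ)
    (hcseq : ∀ j, cseq j = taut ^ (2 / alpha) * tau ^ (-(2 / alpha)) *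
      (kappat ^ 2 + lamhat j) ^ (alphat / alpha) * (kappa ^ 2 + lamhat j)⁻¹) :
    ((∃ m M : ℝ, 0 < m ∧ ∀ j, m ≤ cseq j ∧ cseq j ≤ M) ↔ alphat = alpha) ∧
      (alphat = alpha →
        Tendsto cseq atTop (nhds ((taut / tau) ^ (2 / alpha)))) ∧
      (Summable (fun j => (cseq j - 1) ^ 2) ↔ (alphat = alpha ∧ taut = tau)) :=
  whittle_matern_measure_equivalence_sequence_general lamhat c hc hlow tau taut kappa kappat htau
    htaut alpha alphat halpha cseq hcseq
end
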